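/- arXiv:1403.4428 — 3 statements merged into one kernel-verified Lean document; each statement's English description precedes it below -/
import Mathlib

section
/- Let A be an n×n complex matrix that is diagonalizable, A = F Λ F⁻¹ with Λ = diag(λ₁,…,λₙ); denote by f_i the i-th column of F and by w_i* the i-th row of W = F⁻¹. Let σ ∈ ℂ, let b ∈ ℂⁿ, let x⁽σ⁾ solve (A+σI)x⁽σ⁾ = b, and let x̂₀ ∈ ℂⁿ be any approximation. Expand the error as x⁽σ⁾ − x̂₀ = Σ_{i=1}^n φ_i f_i, let 𝕀 ⊊ {1,…,n} be an index set, set x̄₀ so that x⁽σ⁾ − x̄₀ = Σ_{i∉𝕀} φ_i f_i, and set r̂₀ = (A+σI)(x⁽σ⁾ − x̂₀), r̄₀ = (A+σI)(x⁽σ⁾ − x̄₀). Then for every ℓ ≥ 0 and every polynomial p of degree at most ℓ with p(0) = 1, the minimum of ‖q(A+σI) r̂₀‖₂ over all polynomials q of degree at most ℓ with q(0) = 1 satisfies: min_q ‖q(A+σI) r̂₀‖₂ ≤ ‖p(A+σI) r̄₀‖₂ + ‖Σ_{i∈𝕀} (λ_i+σ) p(λ_i+σ) φ_i f_i‖₂.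 In particular, taking p to be the GMRES residual polynomial p̄_ℓ for starting residual r̄₀ gives ‖r̂_ℓ‖₂ ≤ ‖r̄_ℓ‖₂ + δ with δ = ‖Σ_{i∈𝕀}(λ_i+σ) p̄_ℓ(λ_i+σ) φ_i f_i‖₂. -/
open Matrix Polynomial

/-! The columns `f_i` of `F` are eigenvectors of `A + σI` with eigenvalues `λ_i + σ`, so
`r̂₀ = r̄₀ + Σ_{i∈𝕀} (λ_i+σ) φ_i f_i` and `p(A+σI)` multiplies the `i`-th summand by
`p(λ_i+σ)`. Taking `q = p` in the minimum and applying the triangle inequality gives the bound. -/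

/-- Euclidean (2-) norm of a complex vector. -/
noncomputable def enorm2 {ι : Type*} [Fintype ι] (v : ι → ℂ) : ℝ :=
  ‖(WithLp.equiv 2 (ι → ℂ)).symm v‖

theorem enorm2_nonneg {ι : Type*} [Fintype ι] (v : ι → ℂ) : 0 ≤ enorm2 v :=
  norm_nonneg _

theorem enorm2_add_le {ι : Type*} [Fintype ι] (x y : ι → ℂ) :
    enorm2 (x + y) ≤ enorm2 x + enorm2 y :=
  norm_add_le _ _

namespace Matrix

variable {m R : Type*} [Fintype m] [DecidableEq m] [CommRing R]

theorem mul_diagonal_mul_mulVec_col {F W : Matrix m m R} (hWF : W * F = 1) (d : m → R) (i : m) :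
    (F * diagonal d * W) *ᵥ F.col i = d i • F.col i := by
  have hcancel : F * diagonal d * W * F = F * diagonal d := by
    rw [Matrix.mul_assoc _ W, hWF, Matrix.mul_one]
  rw [← mulVec_single_one, mulVec_mulVec, hcancel, ← mulVec_mulVec, diagonal_mulVec_single,
    ← smul_eq_mul, Pi.single_smul', mulVec_smul]

theorem add_smul_one_mulVec_of_mulVec_eq_smul {M : Matrix m m R} {v : m → R} {μ : R}
    (hv : M *ᵥ v = μ • v) (σ : R) : (M + σ • (1 : Matrix m m R)) *ᵥ v = (μ + σ) • v := by
  rw [add_mulVec, hv, smul_mulVec, one_mulVec, add_smul]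

theorem aeval_mulVec_of_mulVec_eq_smul {M : Matrix m m R} {v : m → R} {μ : R}
    (hv : M *ᵥ v = μ • v) (p : R[X]) : aeval M p *ᵥ v = p.eval μ • v := by
  have hv' : toLinAlgEquiv' M v = μ • v := by rwa [toLinAlgEquiv'_apply]
  rw [← toLinAlgEquiv'_apply, ← aeval_algHom_apply,
    Module.End.aeval_apply_of_mem_apply_eq_smul hv']

theorem aeval_mulVec_mulVec_sum_smul {ι : Type*} {M : Matrix m m R} {s : Finset ι}
    {v : ι → m → R} {μ : ι → R} (hv : ∀ i ∈ s, M *ᵥ v i = μ i • v i) (p : R[X]) (c : ι → R) :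
    aeval M p *ᵥ (M *ᵥ ∑ i ∈ s, c i • v i) = ∑ i ∈ s, (μ i * p.eval (μ i) * c i) • v i := by
  rw [mulVec_sum, mulVec_sum]
  refine Finset.sum_congr rfl fun i hi => ?_
  rw [mulVec_smul, hv i hi, mulVec_smul, mulVec_smul,
    aeval_mulVec_of_mulVec_eq_smul (hv i hi), smul_smul, smul_smul]
  congr 1
  ring

end Matrix

theorem gmres_shifted_seed_projection_bound_general {n : ℕ}
    (A F W : Matrix (Fin n) (Fin n) ℂ) (Λ : Fin n → ℂ)
    (hWF : W * F = 1)
    (hA : A = F * Matrix.diagonal Λ * W)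
    (σ : ℂ) (xσ : Fin n → ℂ)
    (xhat₀ : Fin n → ℂ) (φ : Fin n → ℂ)
    (hφ : xσ - xhat₀ = ∑ i : Fin n, φ i • (fun j => F j i))
    (I : Finset (Fin n))
    (xbar₀ : Fin n → ℂ)
    (hxbar : xσ - xbar₀ = ∑ i ∈ Iᶜ, φ i • (fun j => F j i))
    (rhat₀ rbar₀ : Fin n → ℂ)
    (hrhat : rhat₀ = (A + σ • (1 : Matrix (Fin n) (Fin n) ℂ)).mulVec (xσ - xhat₀))
    (hrbar : rbar₀ = (A + σ • (1 : Matrix (Fin n) (Fin n) ℂ)).mulVec (xσ - xbar₀)) :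
    ∀ (ℓ : ℕ) (p : Polynomial ℂ), p.natDegree ≤ ℓ → p.eval 0 = 1 →
      sInf {t : ℝ | ∃ q : Polynomial ℂ, q.natDegree ≤ ℓ ∧ q.eval 0 = 1 ∧
              t = enorm2 ((Polynomial.aeval
                    (A + σ • (1 : Matrix (Fin n) (Fin n) ℂ)) q).mulVec rhat₀)} ≤
        enorm2 ((Polynomial.aeval
            (A + σ • (1 : Matrix (Fin n) (Fin n) ℂ)) p).mulVec rbar₀) +
          enorm2 (∑ i ∈ I, ((Λ i + σ) * p.eval (Λ i + σ) * φ i) • (fun j => F j i)) := by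
  intro ℓ p hpdeg hp0
  set M := A + σ • (1 : Matrix (Fin n) (Fin n) ℂ)
  have heig : ∀ i ∈ I, M *ᵥ (fun j => F j i) = (Λ i + σ) • fun j => F j i := fun i _ =>
    add_smul_one_mulVec_of_mulVec_eq_smul (hA ▸ mul_diagonal_mul_mulVec_col hWF Λ i) σ
  have hsplit : rhat₀ = rbar₀ + M *ᵥ ∑ i ∈ I, φ i • fun j => F j i := by
    rw [hrhat, hrbar, ← mulVec_add, hxbar, add_comm, Finset.sum_add_sum_compl, hφ]
  have hkey : aeval M p *ᵥ rhat₀ = aeval M p *ᵥ rbar₀ +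
      ∑ i ∈ I, ((Λ i + σ) * p.eval (Λ i + σ) * φ i) • fun j => F j i := by
    rw [hsplit, mulVec_add, aeval_mulVec_mulVec_sum_smul heig]
  calc _ ≤ enorm2 (aeval M p *ᵥ rhat₀) := by
        refine csInf_le ⟨0, ?_⟩ ⟨p, hpdeg, hp0, rfl⟩
        rintro _ ⟨q, -, -, rfl⟩
        exact enorm2_nonneg _
    _ ≤ _ := hkey ▸ enorm2_add_le _ _

/-- Let `A = F Λ W` be diagonalizable (`W = F⁻¹`), `f_i` the columns
of `F`.  Let `(A+σI) x⁽σ⁾ = b`, let `x̂₀` be any approximation with error expansion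
`x⁽σ⁾ − x̂₀ = Σ_i φ_i f_i`, let `𝕀 ⊊ {1,…,n}`, let `x̄₀` satisfy
`x⁽σ⁾ − x̄₀ = Σ_{i∉𝕀} φ_i f_i`, and set `r̂₀ = (A+σI)(x⁽σ⁾ − x̂₀)`,
`r̄₀ = (A+σI)(x⁽σ⁾ − x̄₀)`.  Then for every `ℓ ≥ 0` and every polynomial `p` with
`deg p ≤ ℓ` and `p(0) = 1`,
`min_{q : deg q ≤ ℓ, q(0)=1} ‖q(A+σI) r̂₀‖₂
   ≤ ‖p(A+σI) r̄₀‖₂ + ‖Σ_{i∈𝕀} (λ_i+σ) p(λ_i+σ) φ_i f_i‖₂`.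
(The GMRES residual after `ℓ` steps with initial residual `r̂₀` has norm equal to the
left-hand side; taking `p` to be the GMRES residual polynomial for `r̄₀` gives
`‖r̂_ℓ‖ ≤ ‖r̄_ℓ‖ + δ`.) -/
theorem gmres_shifted_seed_projection_bound {n : ℕ}
    (A F W : Matrix (Fin n) (Fin n) ℂ) (Λ : Fin n → ℂ)
    (hFW : F * W = 1) (hWF : W * F = 1)
    (hA : A = F * Matrix.diagonal Λ * W)
    (σ : ℂ) (b xσ : Fin n → ℂ)
    (hxσ : (A + σ • (1 : Matrix (Fin n) (Fin n) ℂ)).mulVec xσ = b)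
    (xhat₀ : Fin n → ℂ) (φ : Fin n → ℂ)
    (hφ : xσ - xhat₀ = ∑ i : Fin n, φ i • (fun j => F j i))
    (I : Finset (Fin n)) (hI : I ⊂ Finset.univ)
    (xbar₀ : Fin n → ℂ)
    (hxbar : xσ - xbar₀ = ∑ i ∈ Iᶜ, φ i • (fun j => F j i))
    (rhat₀ rbar₀ : Fin n → ℂ)
    (hrhat : rhat₀ = (A + σ • (1 : Matrix (Fin n) (Fin n) ℂ)).mulVec (xσ - xhat₀))
    (hrbar : rbar₀ = (A + σ • (1 : Matrix (Fin n) (Fin n) ℂ)).mulVec (xσ - xbar₀)) :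
    ∀ (ℓ : ℕ) (p : Polynomial ℂ), p.natDegree ≤ ℓ → p.eval 0 = 1 →
      sInf {t : ℝ | ∃ q : Polynomial ℂ, q.natDegree ≤ ℓ ∧ q.eval 0 = 1 ∧
              t = enorm2 ((Polynomial.aeval
                    (A + σ • (1 : Matrix (Fin n) (Fin n) ℂ)) q).mulVec rhat₀)} ≤
        enorm2 ((Polynomial.aeval
            (A + σ • (1 : Matrix (Fin n) (Fin n) ℂ)) p).mulVec rbar₀) +
          enorm2 (∑ i ∈ I, ((Λ i + σ) * p.eval (Λ i + σ) * φ i) • (fun j => F j i)) :=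
  gmres_shifted_seed_projection_bound_general A F W Λ hWF hA σ xσ xhat₀ φ hφ I xbar₀ hxbar rhat₀
    rbar₀ hrhat hrbar
end

section
/- Let A be an n×n complex matrix, let U be an n×k matrix, set C = A U, and suppose C has orthonormal columns. Let V_{m+1} be an n×(m+1) matrix whose first m columns form V_m, let H̄_m be an (m+1)×m matrix with (I − C C*) A V_m = V_{m+1} H̄_m, and set B_m = C* A V_m. Then for every σ ∈ ℂ, (A + σI) [U V_m] = [ (C + σU) (C B_m + V_{m+1} H̄_m + σ V_m) ], where [U V_m] denotes the n×(k+m) matrix formed by concatenating the columns of U and V_m. -/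
open Matrix

namespace Matrix

variable {R : Type*} [Ring R] {l m n p : Type*} [Fintype m] [DecidableEq m]

theorem eq_mul_mul_add_of_one_sub_mul_mul_eq [Fintype n] {C : Matrix m n R}
    {D : Matrix n m R} {X Y : Matrix m p R} (h : (1 - C * D) * X = Y) :
    X = C * (D * X) + Y := by
  rw [← h, Matrix.sub_mul, Matrix.one_mul, Matrix.mul_assoc, add_sub_cancel]

theorem add_smul_one_mul_fromCols (A : Matrix m m R) (σ : R) (U : Matrix m n R)
    (V : Matrix m l R) :
    (A + σ • (1 : Matrix m m R)) * fromCols U V = fromCols (A * U + σ • U) (A * V + σ • V) := by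
  rw [mul_fromCols]
  simp only [Matrix.add_mul, Matrix.smul_mul, Matrix.one_mul]

end Matrix

theorem shifted_augmented_identity_general {n k m : ℕ}
    (A : Matrix (Fin n) (Fin n) ℂ)
    (U : Matrix (Fin n) (Fin k) ℂ)
    (C : Matrix (Fin n) (Fin k) ℂ)
    (hC : C = A * U)
    (V₁ : Matrix (Fin n) (Fin (m + 1)) ℂ)
    (Vm : Matrix (Fin n) (Fin m) ℂ)
    (H : Matrix (Fin (m + 1)) (Fin m) ℂ)
    (hArnoldi : ((1 : Matrix (Fin n) (Fin n) ℂ) - C * Cᴴ) * (A * Vm) = V₁ * H)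
    (Bm : Matrix (Fin k) (Fin m) ℂ)
    (hB : Bm = Cᴴ * (A * Vm))
    (σ : ℂ) :
    (A + σ • (1 : Matrix (Fin n) (Fin n) ℂ)) * fromCols U Vm =
      fromCols (C + σ • U) (C * Bm + V₁ * H + σ • Vm) := by
  rw [add_smul_one_mul_fromCols, ← hC, hB, ← eq_mul_mul_add_of_one_sub_mul_mul_eq hArnoldi]

/-- Let `C = A U` have orthonormal columns, let `V_{m+1}` have first
`m` columns `V_m`, suppose `(I − C C*) A V_m = V_{m+1} H̄_m`, and set `B_m = C* A V_m`.
Then for every `σ ∈ ℂ`,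
`(A + σI) [U  V_m] = [ (C + σU)  (C B_m + V_{m+1} H̄_m + σ V_m) ]`. -/
theorem shifted_augmented_identity {n k m : ℕ}
    (A : Matrix (Fin n) (Fin n) ℂ)
    (U : Matrix (Fin n) (Fin k) ℂ)
    (C : Matrix (Fin n) (Fin k) ℂ)
    (hC : C = A * U)
    (hCorth : Cᴴ * C = 1)
    (V₁ : Matrix (Fin n) (Fin (m + 1)) ℂ)
    (Vm : Matrix (Fin n) (Fin m) ℂ)
    (hV : Vm = V₁.submatrix id Fin.castSucc)
    (H : Matrix (Fin (m + 1)) (Fin m) ℂ)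
    (hArnoldi : ((1 : Matrix (Fin n) (Fin n) ℂ) - C * Cᴴ) * (A * Vm) = V₁ * H)
    (Bm : Matrix (Fin k) (Fin m) ℂ)
    (hB : Bm = Cᴴ * (A * Vm))
    (σ : ℂ) :
    (A + σ • (1 : Matrix (Fin n) (Fin n) ℂ)) * fromCols U Vm =
      fromCols (C + σ • U) (C * Bm + V₁ * H + σ • Vm) :=
  shifted_augmented_identity_general A U C hC V₁ Vm H hArnoldi Bm hB σ
end

section
/- Let A and M be n×n complex matrices with M invertible, and let A_p = A M⁻¹ and A_p⁽σ⁾ = (A + σI) M⁻¹ for σ ∈ ℂ. Let U be n×k, C = A_p U, V_{m+1} be n×(m+1) with first m columns V_m, and suppose the augmented Arnoldi relation A_p [U V_m] = [C V_{m+1}] Ḡ_m holds with [C V_{m+1}] having orthonormal columns, where Ḡ_m is (k+m+1)×(k+m). Set Z_U = M⁻¹U and Z_m = M⁻¹V_m. Then A_p⁽σ⁾ [U V_m] = [C V_{m+1}] Ḡ_m + σ [Z_U Z_m], and N_m⁽σ⁾ = (A_p⁽σ⁾[U V_m])* (A_p⁽σ⁾[U V_m]) = Ḡ_m* Ḡ_m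 + |σ|² [[Z_U*Z_U, Z_U*Z_m],[Z_m*Z_U, Z_m*Z_m]] + σ Ḡ_m* [[C*Z_U, C*Z_m],[V_{m+1}*Z_U, V_{m+1}*Z_m]] + σ̄ [[Z_U*C, Z_U*V_{m+1}],[Z_m*C, Z_m*V_{m+1}]] Ḡ_m. -/
open Matrix

/-!
Since `(A + σI) M⁻¹ = A M⁻¹ + σ M⁻¹`, the shifted operator maps `[U  V_m]` to the right-hand side
of the Arnoldi relation plus `σ [Z_U  Z_m]`. Expanding the Gram matrix of this sum, orthonormality
of `[C  V_{m+1}]` collapses the leading term to `Ḡ_m* Ḡ_m`.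
-/

namespace Matrix

variable {R : Type*} {l m n p q : Type*}

theorem add_smul_one_mul [CommSemiring R] [Fintype n] [DecidableEq n]
    (A : Matrix n n R) (σ : R) (B : Matrix n p R) :
    (A + σ • (1 : Matrix n n R)) * B = A * B + σ • B := by
  rw [Matrix.add_mul, Matrix.smul_mul, Matrix.one_mul]

theorem conjTranspose_fromCols_mul_fromCols [Semiring R] [StarRing R] [Fintype m]
    (X₁ : Matrix m n R) (X₂ : Matrix m p R) (Y₁ : Matrix m q R) (Y₂ : Matrix m l R) :
    (fromCols X₁ X₂)ᴴ * fromCols Y₁ Y₂ =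
      fromBlocks (X₁ᴴ * Y₁) (X₁ᴴ * Y₂) (X₂ᴴ * Y₁) (X₂ᴴ * Y₂) := by
  rw [conjTranspose_fromCols_eq_fromRows_conjTranspose, fromRows_mul_fromCols]

theorem conjTranspose_mul_self_of_orthonormal_add_smul [CommSemiring R] [StarRing R]
    [Fintype m] [Fintype p] [DecidableEq p]
    (Q : Matrix m p R) (G : Matrix p q R) (Z : Matrix m q R) (σ : R) (hQ : Qᴴ * Q = 1) :
    (Q * G + σ • Z)ᴴ * (Q * G + σ • Z) =
      Gᴴ * G + (σ * starRingEnd R σ) • (Zᴴ * Z) + σ • (Gᴴ * (Qᴴ * Z)) +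
        starRingEnd R σ • (Zᴴ * Q * G) := by
  have hQG : (Q * G)ᴴ * (Q * G) = Gᴴ * G := by
    rw [conjTranspose_mul, Matrix.mul_assoc, ← Matrix.mul_assoc Qᴴ, hQ, Matrix.one_mul]
  rw [conjTranspose_add, conjTranspose_smul, Matrix.add_mul, Matrix.mul_add, Matrix.mul_add,
    hQG, Matrix.mul_smul, Matrix.smul_mul, Matrix.smul_mul, Matrix.mul_smul, smul_smul,
    conjTranspose_mul, Matrix.mul_assoc, Matrix.mul_assoc, starRingEnd_apply, mul_comm]
  abel

end Matrix

theorem preconditioned_shifted_augmented_arnoldi_general {n k m : ℕ}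
    (A M : Matrix (Fin n) (Fin n) ℂ)
    (σ : ℂ)
    (U : Matrix (Fin n) (Fin k) ℂ)
    (C : Matrix (Fin n) (Fin k) ℂ)
    (V₁ : Matrix (Fin n) (Fin (m + 1)) ℂ)
    (Vm : Matrix (Fin n) (Fin m) ℂ)
    (G : Matrix (Fin k ⊕ Fin (m + 1)) (Fin k ⊕ Fin m) ℂ)
    (hArnoldi : A * M⁻¹ * fromCols U Vm = fromCols C V₁ * G)
    (hOrth : (fromCols C V₁)ᴴ * fromCols C V₁ = 1)
    (Zu : Matrix (Fin n) (Fin k) ℂ) (hZu : Zu = M⁻¹ * U)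
    (Zm : Matrix (Fin n) (Fin m) ℂ) (hZm : Zm = M⁻¹ * Vm) :
    (A + σ • (1 : Matrix (Fin n) (Fin n) ℂ)) * M⁻¹ * fromCols U Vm =
        fromCols C V₁ * G + σ • fromCols Zu Zm ∧
      ((A + σ • (1 : Matrix (Fin n) (Fin n) ℂ)) * M⁻¹ * fromCols U Vm)ᴴ *
          ((A + σ • (1 : Matrix (Fin n) (Fin n) ℂ)) * M⁻¹ * fromCols U Vm) =
        Gᴴ * G +
          (σ * starRingEnd ℂ σ) •
            fromBlocks (Zuᴴ * Zu) (Zuᴴ * Zm) (Zmᴴ * Zu) (Zmᴴ * Zm) +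
          σ • (Gᴴ * fromBlocks (Cᴴ * Zu) (Cᴴ * Zm) (V₁ᴴ * Zu) (V₁ᴴ * Zm)) +
          (starRingEnd ℂ σ) •
            (fromBlocks (Zuᴴ * C) (Zuᴴ * V₁) (Zmᴴ * C) (Zmᴴ * V₁) * G) := by
  have hZ : M⁻¹ * fromCols U Vm = fromCols Zu Zm := by
    rw [mul_fromCols, hZu, hZm]
  have hShift : (A + σ • (1 : Matrix (Fin n) (Fin n) ℂ)) * M⁻¹ * fromCols U Vm =
      fromCols C V₁ * G + σ • fromCols Zu Zm := by
    rw [add_smul_one_mul, Matrix.add_mul, hArnoldi, Matrix.smul_mul, hZ]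
  refine ⟨hShift, ?_⟩
  rw [hShift, conjTranspose_mul_self_of_orthonormal_add_smul _ _ _ _ hOrth,
    conjTranspose_fromCols_mul_fromCols, conjTranspose_fromCols_mul_fromCols,
    conjTranspose_fromCols_mul_fromCols]

/-- With `A_p = A M⁻¹`, `A_p⁽σ⁾ = (A + σI) M⁻¹`, `C = A_p U`, the
augmented Arnoldi relation `A_p [U  V_m] = [C  V_{m+1}] Ḡ_m` where `[C  V_{m+1}]` has
orthonormal columns, `Z_U = M⁻¹U` and `Z_m = M⁻¹V_m`, we have
`A_p⁽σ⁾ [U  V_m] = [C  V_{m+1}] Ḡ_m + σ [Z_U  Z_m]` and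
`N_m⁽σ⁾ = Ḡ_m* Ḡ_m + |σ|² [[Z_U*Z_U, Z_U*Z_m],[Z_m*Z_U, Z_m*Z_m]]
  + σ Ḡ_m* [[C*Z_U, C*Z_m],[V_{m+1}*Z_U, V_{m+1}*Z_m]]
  + σ̄ [[Z_U*C, Z_U*V_{m+1}],[Z_m*C, Z_m*V_{m+1}]] Ḡ_m`. -/
theorem preconditioned_shifted_augmented_arnoldi {n k m : ℕ}
    (A M : Matrix (Fin n) (Fin n) ℂ) (hM : Invertible M)
    (σ : ℂ)
    (U : Matrix (Fin n) (Fin k) ℂ)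
    (C : Matrix (Fin n) (Fin k) ℂ)
    (hC : C = A * M⁻¹ * U)
    (V₁ : Matrix (Fin n) (Fin (m + 1)) ℂ)
    (Vm : Matrix (Fin n) (Fin m) ℂ)
    (hV : Vm = V₁.submatrix id Fin.castSucc)
    (G : Matrix (Fin k ⊕ Fin (m + 1)) (Fin k ⊕ Fin m) ℂ)
    (hArnoldi : A * M⁻¹ * fromCols U Vm = fromCols C V₁ * G)
    (hOrth : (fromCols C V₁)ᴴ * fromCols C V₁ = 1)
    (Zu : Matrix (Fin n) (Fin k) ℂ) (hZu : Zu = M⁻¹ * U)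
    (Zm : Matrix (Fin n) (Fin m) ℂ) (hZm : Zm = M⁻¹ * Vm) :
    (A + σ • (1 : Matrix (Fin n) (Fin n) ℂ)) * M⁻¹ * fromCols U Vm =
        fromCols C V₁ * G + σ • fromCols Zu Zm ∧
      ((A + σ • (1 : Matrix (Fin n) (Fin n) ℂ)) * M⁻¹ * fromCols U Vm)ᴴ *
          ((A + σ • (1 : Matrix (Fin n) (Fin n) ℂ)) * M⁻¹ * fromCols U Vm) =
        Gᴴ * G +
          (σ * starRingEnd ℂ σ) •
            fromBlocks (Zuᴴ * Zu) (Zuᴴ * Zm) (Zmᴴ * Zu) (Zmᴴ * Zm) +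
          σ • (Gᴴ * fromBlocks (Cᴴ * Zu) (Cᴴ * Zm) (V₁ᴴ * Zu) (V₁ᴴ * Zm)) +
          (starRingEnd ℂ σ) •
            (fromBlocks (Zuᴴ * C) (Zuᴴ * V₁) (Zmᴴ * C) (Zmᴴ * V₁) * G) :=
  preconditioned_shifted_augmented_arnoldi_general A M σ U C V₁ Vm G hArnoldi hOrth Zu hZu Zm hZm
end
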